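/- With the setup of a device holding subsets T_1^(z),…,T_k^(z) of the global clusters with at most k' nonempty, the local data-minus-local-means matrix satisfies ‖A^(z) − C^(z)‖_op ≤ (1 + √k')·‖A − C‖_op ≤ 2√k'·‖A − C‖_op, provided k' ≥ 1. -/

import Mathlib

/-- The ℓ2 (spectral) operator norm of a matrix. -/
noncomputable def opNorm {n d : ℕ} (M : Matrix (Fin n) (Fin d) ℝ) : ℝ :=
  ‖LinearMap.toContinuousLinearMap (Matrix.toEuclideanLin M)‖

/-- Mean of the rows of `A` indexed by `S`, as a point of Euclidean space. -/
noncomputable def clMean {n d : ℕ} (A : Matrix (Fin n) (Fin d) ℝ) (S : Finset (Fin n)) :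
    EuclideanSpace ℝ (Fin d) :=
  (S.card : ℝ)⁻¹ • ∑ i ∈ S, (WithLp.equiv 2 (Fin d → ℝ)).symm (A i)

/-- The cluster (as a `Finset`) of label `r` under the cluster assignment `c`. -/
def cluster {n k : ℕ} (c : Fin n → Fin k) (r : Fin k) : Finset (Fin n) :=
  Finset.univ.filter (fun j => c j = r)

/-- Local cluster on a device whose rows are selected by the embedding `e`. -/
def localCluster {n m k : ℕ} (c : Fin n → Fin k) (e : Fin m ↪ Fin n) (r : Fin k) :
    Finset (Fin m) :=
  Finset.univ.filter (fun i => c (e i) = r)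

/-!
Let `P` average a vector over the local clusters, i.e. the fibres of `c ∘ e`. It is the
orthogonal projection onto the vectors that are constant on local clusters, so `‖1 - P‖ ≤ 1`.
The local means are the rows of `P A^(z)`, and since every local cluster lies inside a single
global cluster, the rows of `C` restricted to the device are already constant on local clusters:
`P C̃^(z) = C̃^(z)`. Hence `A^(z) - C^(z) = (1 - P) (A - C)^(z)`, and restricting to a subset of
rows does not increase the operator norm, so `‖A^(z) - C^(z)‖ ≤ ‖A - C‖`. Both stated
inequalities follow because `√k' ≥ 1`.
-/

open Finset Matrix
open scoped Matrix.Norms.L2Operator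

lemma Finset.sum_sq_sub_avg_le {ι : Type*} (s : Finset ι) (y : ι → ℝ) :
    ∑ i ∈ s, (y i - (#s : ℝ)⁻¹ * ∑ j ∈ s, y j) ^ 2 ≤ ∑ i ∈ s, y i ^ 2 := by
  set μ := (#s : ℝ)⁻¹ * ∑ j ∈ s, y j
  have hsum : ∑ j ∈ s, y j = #s * μ := by
    rcases s.eq_empty_or_nonempty with rfl | hs
    · simp
    · rw [mul_inv_cancel_left₀ (by exact_mod_cast hs.card_pos.ne')]
  -- the left side is `∑ y² - #s μ²`
  simp only [sub_sq, sum_add_distrib, sum_sub_distrib, ← sum_mul, ← mul_sum, sum_const,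
    nsmul_eq_mul, hsum]
  nlinarith [mul_nonneg (Nat.cast_nonneg (α := ℝ) #s) (sq_nonneg μ)]

section Fiberwise

variable {ι κ : Type*} [Fintype ι] [DecidableEq κ]

lemma sum_sq_sub_fiberwise_avg_le (g : ι → κ) (y : ι → ℝ) :
    ∑ i, (y i - (#{j | g j = g i} : ℝ)⁻¹ * ∑ j with g j = g i, y j) ^ 2 ≤ ∑ i, y i ^ 2 := by
  have hmaps : ∀ i ∈ (univ : Finset ι), g i ∈ univ.image g :=
    fun i _ => mem_image_of_mem g (mem_univ i)
  rw [← sum_fiberwise_of_maps_to hmaps, ← sum_fiberwise_of_maps_to hmaps]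
  refine sum_le_sum fun r _ => ?_
  have hfiber : ∀ i ∈ ({i | g i = r} : Finset ι),
      (y i - (#{j | g j = g i} : ℝ)⁻¹ * ∑ j with g j = g i, y j) ^ 2
        = (y i - (#{j | g j = r} : ℝ)⁻¹ * ∑ j with g j = r, y j) ^ 2 := by
    intro i hi
    rw [(mem_filter.1 hi).2]
  rw [sum_congr rfl hfiber]
  exact sum_sq_sub_avg_le _ y

noncomputable def Matrix.fiberAvg (g : ι → κ) : Matrix ι ι ℝ :=
  of fun i j => if g j = g i then (#{l | g l = g i} : ℝ)⁻¹ else 0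

lemma Matrix.sum_fiberAvg_mul (g : ι → κ) (i : ι) (y : ι → ℝ) :
    ∑ j, fiberAvg g i j * y j = (#{l | g l = g i} : ℝ)⁻¹ * ∑ j with g j = g i, y j := by
  simp only [fiberAvg, of_apply, ite_mul, zero_mul, ← sum_filter, mul_sum]

lemma Matrix.fiberAvg_mul_of_forall_eq {δ : Type*} {g : ι → κ} {M : Matrix ι δ ℝ}
    (hM : ∀ i j, g i = g j → M i = M j) : fiberAvg g * M = M := by
  ext i k
  have hi : i ∈ ({l | g l = g i} : Finset ι) := by simp
  rw [mul_apply, sum_fiberAvg_mul,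
    sum_congr rfl fun j hj => congrFun (hM j i (mem_filter.1 hj).2) k, sum_const, nsmul_eq_mul,
    inv_mul_cancel_left₀ (by exact_mod_cast (card_pos.2 ⟨i, hi⟩).ne')]

end Fiberwise

section L2OpNorm

variable {𝕜 l m n : Type*} [RCLike 𝕜] [Fintype l] [Fintype m] [Fintype n] [DecidableEq n]

lemma Matrix.l2_opNorm_le_bound (M : Matrix m n 𝕜) {C : ℝ} (hC : 0 ≤ C)
    (h : ∀ x : EuclideanSpace 𝕜 n, ‖(EuclideanSpace.equiv m 𝕜).symm (M *ᵥ x)‖ ≤ C * ‖x‖) :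
    ‖M‖ ≤ C :=
  ContinuousLinearMap.opNorm_le_bound _ hC h

lemma Matrix.l2_opNorm_submatrix_le (M : Matrix m n 𝕜) (e : l ↪ m) :
    ‖M.submatrix e id‖ ≤ ‖M‖ := by
  refine l2_opNorm_le_bound _ (norm_nonneg M) fun x => le_trans ?_ (M.l2_opNorm_mulVec x)
  rw [EuclideanSpace.norm_eq, EuclideanSpace.norm_eq]
  refine Real.sqrt_le_sqrt ?_
  calc ∑ i, ‖(M *ᵥ x) (e i)‖ ^ 2 = ∑ j ∈ univ.map e, ‖(M *ᵥ x) j‖ ^ 2 := by rw [sum_map]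
    _ ≤ ∑ j, ‖(M *ᵥ x) j‖ ^ 2 := sum_le_univ_sum_of_nonneg fun _ => by positivity

end L2OpNorm

lemma Matrix.l2_opNorm_one_sub_fiberAvg_le {ι κ : Type*} [Fintype ι] [DecidableEq ι]
    [DecidableEq κ] (g : ι → κ) : ‖1 - fiberAvg g‖ ≤ 1 := by
  refine l2_opNorm_le_bound _ zero_le_one fun x => ?_
  rw [one_mul, sub_mulVec, one_mulVec, EuclideanSpace.norm_eq, EuclideanSpace.norm_eq]
  refine Real.sqrt_le_sqrt ?_
  simp only [PiLp.continuousLinearEquiv_symm_apply, WithLp.toLp_sub, WithLp.toLp_ofLp,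
    PiLp.sub_apply, mulVec, dotProduct, sum_fiberAvg_mul, Real.norm_eq_abs, sq_abs]
  exact sum_sq_sub_fiberwise_avg_le g x

lemma opNorm_eq_norm {n d : ℕ} (M : Matrix (Fin n) (Fin d) ℝ) : opNorm M = ‖M‖ := rfl

lemma clMean_apply {n d : ℕ} (A : Matrix (Fin n) (Fin d) ℝ) (S : Finset (Fin n)) (j : Fin d) :
    clMean A S j = (#S : ℝ)⁻¹ * ∑ i ∈ S, A i j := by
  simp only [clMean, PiLp.smul_apply, smul_eq_mul, WithLp.equiv_symm_apply, WithLp.ofLp_sum]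
  exact congrArg _ (Finset.sum_apply j _ _)

section Clustering

variable {n m d k : ℕ} {A C : Matrix (Fin n) (Fin d) ℝ} {c : Fin n → Fin k} {e : Fin m ↪ Fin n}

lemma row_eq_of_label_eq
    (hC : ∀ i, (WithLp.equiv 2 (Fin d → ℝ)).symm (C i) = clMean A (cluster c (c i)))
    {i j : Fin n} (h : c i = c j) : C i = C j :=
  (WithLp.equiv 2 (Fin d → ℝ)).symm.injective (by rw [hC, hC, h])

lemma localMeans_eq_fiberAvg_mul {Cz : Matrix (Fin m) (Fin d) ℝ}
    (hCz : ∀ i, (WithLp.equiv 2 (Fin d → ℝ)).symm (Cz i)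
        = clMean (A.submatrix ⇑e id) (localCluster c e (c (e i)))) :
    Cz = fiberAvg (fun i => c (e i)) * A.submatrix e id := by
  ext i j
  rw [mul_apply, sum_fiberAvg_mul, show Cz i j = _ from congrFun (congrArg WithLp.ofLp (hCz i)) j,
    clMean_apply]
  rfl

lemma sub_localMeans_eq {Cz : Matrix (Fin m) (Fin d) ℝ}
    (hC : ∀ i, (WithLp.equiv 2 (Fin d → ℝ)).symm (C i) = clMean A (cluster c (c i)))
    (hCz : ∀ i, (WithLp.equiv 2 (Fin d → ℝ)).symm (Cz i)
        = clMean (A.submatrix ⇑e id) (localCluster c e (c (e i)))) :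
    A.submatrix e id - Cz = (1 - fiberAvg (fun i => c (e i))) * (A - C).submatrix e id := by
  have hCe : fiberAvg (fun i => c (e i)) * C.submatrix e id = C.submatrix e id :=
    fiberAvg_mul_of_forall_eq fun _ _ h => row_eq_of_label_eq hC h
  rw [localMeans_eq_fiberAvg_mul hCz,
    show (A - C).submatrix e id = A.submatrix e id - C.submatrix e id from rfl,
    Matrix.sub_mul, Matrix.one_mul, Matrix.mul_sub, hCe]
  abel

end Clustering

theorem local_data_opNorm_bound_general {n m d k k' : ℕ} (A C : Matrix (Fin n) (Fin d) ℝ)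
    (c : Fin n → Fin k) (e : Fin m ↪ Fin n)
    (Cz : Matrix (Fin m) (Fin d) ℝ)
    (hC : ∀ i, (WithLp.equiv 2 (Fin d → ℝ)).symm (C i) = clMean A (cluster c (c i)))
    (hCz : ∀ i, (WithLp.equiv 2 (Fin d → ℝ)).symm (Cz i)
        = clMean (A.submatrix ⇑e id) (localCluster c e (c (e i))))
    (hk1 : 1 ≤ k') :
    opNorm (A.submatrix ⇑e id - Cz) ≤ (1 + Real.sqrt k') * opNorm (A - C) ∧
      (1 + Real.sqrt k') * opNorm (A - C) ≤ 2 * Real.sqrt k' * opNorm (A - C) := by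
  have hcontract : opNorm (A.submatrix ⇑e id - Cz) ≤ opNorm (A - C) := by
    rw [opNorm_eq_norm, opNorm_eq_norm, sub_localMeans_eq hC hCz]
    calc _ ≤ ‖1 - fiberAvg (fun i => c (e i))‖ * ‖(A - C).submatrix e id‖ := l2_opNorm_mul _ _
      _ ≤ 1 * ‖A - C‖ := by
          gcongr
          exacts [l2_opNorm_one_sub_fiberAvg_le _, l2_opNorm_submatrix_le _ e]
      _ = ‖A - C‖ := one_mul _
  have hsqrt : 1 ≤ Real.sqrt k' := Real.one_le_sqrt.2 (by exact_mod_cast hk1)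
  have hnorm : 0 ≤ opNorm (A - C) := norm_nonneg _
  constructor <;> nlinarith

theorem local_data_opNorm_bound {n m d k k' : ℕ} (A C : Matrix (Fin n) (Fin d) ℝ)
    (c : Fin n → Fin k) (e : Fin m ↪ Fin n)
    (Cz : Matrix (Fin m) (Fin d) ℝ)
    (hC : ∀ i, (WithLp.equiv 2 (Fin d → ℝ)).symm (C i) = clMean A (cluster c (c i)))
    (hCz : ∀ i, (WithLp.equiv 2 (Fin d → ℝ)).symm (Cz i)
        = clMean (A.submatrix ⇑e id) (localCluster c e (c (e i))))
    (hk' : (Finset.univ.filter fun r => (localCluster c e r).Nonempty).card ≤ k')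
    (hk1 : 1 ≤ k') :
    opNorm (A.submatrix ⇑e id - Cz) ≤ (1 + Real.sqrt k') * opNorm (A - C) ∧
      (1 + Real.sqrt k') * opNorm (A - C) ≤ 2 * Real.sqrt k' * opNorm (A - C) :=
  local_data_opNorm_bound_general A C c e Cz hC hCz hk1
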